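/- Let Γ, Δ ∈ Ω_w be support graphs of a word w and φ: Γ → Δ a rooted X-digraph epimorphism. Then there exists a rooted X-digraph epimorphism ψ: ι(Γ) → ι(Δ) sending the flow π_{w_i}^{(Γ)} to π_{w_i}^{(Δ)}, and the square with the canonical maps τ_1: ι(Γ) → Γ, τ_2: ι(Δ) → Δ commutes: φ ∘ τ_1 = τ_2 ∘ ψ. -/

import Mathlib

open scoped Classical

/-- A rooted `X`-digraph: vertices of type `V`, positive edges labeled by `X`. -/
structure LGraph (X V : Type*) where
  root : V
  edge : V → X → V → Prop

/-- Folded (deterministic on positive labels). -/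
def LGraph.Folded {X V : Type*} (G : LGraph X V) : Prop :=
  ∀ v x w w', G.edge v x w → G.edge v x w' → w = w'

/-- Deterministic on inverse labels (foldedness of the inverse graph). -/
def LGraph.CoFolded {X V : Type*} (G : LGraph X V) : Prop :=
  ∀ v v' x w, G.edge v x w → G.edge v' x w → v = v'

/-- A word is reduced if it has no cancelling adjacent pair `x x⁻¹`. -/
def Reduced {X : Type*} (w : List (X × Bool)) : Prop :=
  w.Chain' fun a b => ¬(a.1 = b.1 ∧ a.2 ≠ b.2)

/-- The support graph of the word `w` presented by the vertex-naming function
`ν : ℕ → ℕ` (the image of the path graph `Γ(w)` under `i ↦ ν i`): the root is `ν 0`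
and the positive edges are those traversed by `w`, the `j`-th letter `(x, true)` giving
the edge `ν j →^x ν (j+1)` and `(x, false)` giving `ν (j+1) →^x ν j`.
Taking `ν` injective gives the path graph `Γ(w)` itself. -/
def GraphOf {X : Type*} (w : List (X × Bool)) (ν : ℕ → ℕ) : LGraph X ℕ where
  root := ν 0
  edge a x b := ∃ j < w.length,
    (w[j]? = some (x, true) ∧ ν j = a ∧ ν (j + 1) = b) ∨
    (w[j]? = some (x, false) ∧ ν j = b ∧ ν (j + 1) = a)

/-- The flow defined by the length-`i` prefix of `w` on the support graph `GraphOf w ν`,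
as a function assigning to each positive edge `(a, x, b)` the algebraic number of its
traversals. -/
noncomputable def pflow {X : Type*} (w : List (X × Bool)) (ν : ℕ → ℕ) (i : ℕ) :
    ℕ × X × ℕ → ℤ :=
  fun e => ∑ j ∈ Finset.range i,
    ((if w[j]? = some (e.2.1, true) ∧ ν j = e.1 ∧ ν (j + 1) = e.2.2 then 1 else 0) +
     (if w[j]? = some (e.2.1, false) ∧ ν j = e.2.2 ∧ ν (j + 1) = e.1 then -1 else 0))

/-- The graph `ι(Γ)` of the support graph `Γ = GraphOf w ν`: its vertices are the flows
on `Γ` defined by the prefixes of `w`, with an edge between the flows of consecutive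
prefixes labeled by the corresponding letter of `w`. -/
noncomputable def IotaGraph {X : Type*} (w : List (X × Bool)) (ν : ℕ → ℕ) :
    LGraph X ((ℕ × X × ℕ) → ℤ) where
  root := pflow w ν 0
  edge a x b := ∃ j < w.length,
    (w[j]? = some (x, true) ∧ a = pflow w ν j ∧ b = pflow w ν (j + 1)) ∨
    (w[j]? = some (x, false) ∧ a = pflow w ν (j + 1) ∧ b = pflow w ν j)

/-- A rooted `X`-digraph morphism. -/
def IsMor {X V U : Type*} (G : LGraph X V) (D : LGraph X U) (φ : V → U) : Prop :=
  φ G.root = D.root ∧ ∀ a x b, G.edge a x b → D.edge (φ a) x (φ b)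

/-- A rooted `X`-digraph epimorphism: a morphism that is surjective on the edges (hence
on the vertices of the connected graphs considered here). -/
def IsEpiOn {X V U : Type*} (G : LGraph X V) (D : LGraph X U) (φ : V → U) : Prop :=
  IsMor G D φ ∧ ∀ a x b, D.edge a x b → ∃ a' b', G.edge a' x b' ∧ φ a' = a ∧ φ b' = b

/-!
A morphism `φ : Γ → Δ` of support graphs of `w` into a folded and co-folded `Δ` must carry
the walk of `w` in `Γ` onto the walk of `w` in `Δ`, since each step of the image walk is
forced by its letter. Prefix flows are prefix sums of signed edge indicators, i.e. integral
1-chains; the boundary of the `i`-th one is `[ν i] - [ν 0]`, so a prefix flow determines the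
endpoint of its prefix, and the pushforward of chains along `φ` sends the prefix flows on `Γ`
to those on `Δ`. Hence `τ₁`, `τ₂` and `ψ` are well defined on prefix flows, and each of them
maps the walk of `w` onto another walk of `w`, which makes it an epimorphism.
-/

theorem Function.exists_apply_eq_of_factorsThrough_Iic {α β : Type*} {f : ℕ → α} {g : ℕ → β}
    {n : ℕ} (h : ∀ i ≤ n, ∀ i' ≤ n, f i = f i' → g i = g i') :
    ∃ F : α → β, ∀ i ≤ n, F (f i) = g i := by
  let f' : Set.Iic n → α := fun i => f i
  have hf' : Function.FactorsThrough (fun i : Set.Iic n => g i) f' :=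
    fun i i' hii' => h i i.2 i' i'.2 hii'
  exact ⟨Function.extend f' (fun i => g i) (fun _ => g 0), fun i hi => hf'.extend_apply _ ⟨i, hi⟩⟩

namespace LGraph

variable {X V U : Type*}

def ofWalk (w : List (X × Bool)) (f : ℕ → V) : LGraph X V where
  root := f 0
  edge a x b := ∃ j < w.length,
    (w[j]? = some (x, true) ∧ f j = a ∧ f (j + 1) = b) ∨
    (w[j]? = some (x, false) ∧ f j = b ∧ f (j + 1) = a)

theorem graphOf_eq_ofWalk (w : List (X × Bool)) (ν : ℕ → ℕ) : GraphOf w ν = ofWalk w ν := rfl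

theorem iotaGraph_eq_ofWalk (w : List (X × Bool)) (ν : ℕ → ℕ) :
    IotaGraph w ν = ofWalk w (pflow w ν) := by
  simp only [IotaGraph, ofWalk, mk.injEq, true_and]
  ext a x b
  grind

theorem isEpiOn_ofWalk {w : List (X × Bool)} {f : ℕ → V} {g : ℕ → U} {h : V → U}
    (hfg : ∀ i ≤ w.length, h (f i) = g i) : IsEpiOn (ofWalk w f) (ofWalk w g) h := by
  refine ⟨⟨hfg 0 (Nat.zero_le _), ?_⟩, ?_⟩
  · rintro a x b ⟨j, hj, ⟨hw, rfl, rfl⟩ | ⟨hw, rfl, rfl⟩⟩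
    · exact ⟨j, hj, .inl ⟨hw, (hfg j hj.le).symm, (hfg (j + 1) hj).symm⟩⟩
    · exact ⟨j, hj, .inr ⟨hw, (hfg j hj.le).symm, (hfg (j + 1) hj).symm⟩⟩
  · rintro a x b ⟨j, hj, ⟨hw, rfl, rfl⟩ | ⟨hw, rfl, rfl⟩⟩
    · exact ⟨f j, f (j + 1), ⟨j, hj, .inl ⟨hw, rfl, rfl⟩⟩, hfg j hj.le, hfg (j + 1) hj⟩
    · exact ⟨f (j + 1), f j, ⟨j, hj, .inr ⟨hw, rfl, rfl⟩⟩, hfg (j + 1) hj, hfg j hj.le⟩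

end LGraph

open LGraph

theorem IsMor.apply_walk_eq {X V U : Type*} {w : List (X × Bool)} {f : ℕ → V} {g : ℕ → U}
    {h : V → U} (hh : IsMor (ofWalk w f) (ofWalk w g) h) (hF : (ofWalk w g).Folded)
    (hC : (ofWalk w g).CoFolded) : ∀ i ≤ w.length, h (f i) = g i := by
  intro i
  induction i with
  | zero => exact fun _ => hh.1
  | succ j ih =>
    intro hj
    have hj : j < w.length := hj
    obtain ⟨⟨x, s⟩, hw⟩ : ∃ l, w[j]? = some l := ⟨_, List.getElem?_eq_getElem hj⟩
    cases s
    · have himage := hh.2 _ _ _ (⟨j, hj, .inr ⟨hw, rfl, rfl⟩⟩ : (ofWalk w f).edge _ x _)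
      rw [ih hj.le] at himage
      exact hC _ _ _ _ himage ⟨j, hj, .inr ⟨hw, rfl, rfl⟩⟩
    · have himage := hh.2 _ _ _ (⟨j, hj, .inl ⟨hw, rfl, rfl⟩⟩ : (ofWalk w f).edge _ x _)
      rw [ih hj.le] at himage
      exact hF _ _ _ _ himage ⟨j, hj, .inl ⟨hw, rfl, rfl⟩⟩

section Chains

variable {X V U : Type*}

noncomputable def letterChain (w : List (X × Bool)) (f : ℕ → V) (j : ℕ) : (V × X × V) →₀ ℤ :=
  match w[j]? with
  | some (x, true) => Finsupp.single (f j, x, f (j + 1)) 1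
  | some (x, false) => Finsupp.single (f (j + 1), x, f j) (-1)
  | none => 0

noncomputable def prefixChain (w : List (X × Bool)) (f : ℕ → V) (i : ℕ) : (V × X × V) →₀ ℤ :=
  ∑ j ∈ Finset.range i, letterChain w f j

noncomputable def chainBoundary : ((V × X × V) →₀ ℤ) →+ (V →₀ ℤ) :=
  Finsupp.mapDomain.addMonoidHom (fun e => e.2.2) - Finsupp.mapDomain.addMonoidHom Prod.fst

theorem coe_prefixChain (w : List (X × Bool)) (ν : ℕ → ℕ) (i : ℕ) :
    ⇑(prefixChain w ν i) = pflow w ν i := by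
  funext e
  simp only [prefixChain, Finsupp.finsetSum_apply, pflow]
  refine Finset.sum_congr rfl fun j _ => ?_
  rcases hw : w[j]? with _ | ⟨x, _ | _⟩
  · simp [letterChain, hw]
  · simp only [letterChain, hw, Finsupp.single_apply]
    grind
  · simp only [letterChain, hw, Finsupp.single_apply]
    grind

theorem prefixChain_congr {w : List (X × Bool)} {f g : ℕ → V} {i : ℕ}
    (hfg : ∀ j ≤ i, f j = g j) : prefixChain w f i = prefixChain w g i := by
  refine Finset.sum_congr rfl fun j hj => ?_
  have hj : j < i := Finset.mem_range.mp hj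
  simp only [letterChain, hfg j hj.le, hfg (j + 1) hj]

theorem mapDomain_prefixChain (w : List (X × Bool)) (f : ℕ → V) (h : V → U) (i : ℕ) :
    (prefixChain w f i).mapDomain (Prod.map h (Prod.map id h)) = prefixChain w (h ∘ f) i := by
  simp only [prefixChain, Finsupp.mapDomain_finsetSum]
  refine Finset.sum_congr rfl fun j _ => ?_
  unfold letterChain
  split <;> simp only [Finsupp.mapDomain_single, Finsupp.mapDomain_zero] <;> rfl

theorem chainBoundary_prefixChain {w : List (X × Bool)} (f : ℕ → V) {i : ℕ}
    (hi : i ≤ w.length) :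
    chainBoundary (prefixChain w f i) = Finsupp.single (f i) 1 - Finsupp.single (f 0) 1 := by
  rw [prefixChain, map_sum]
  refine (Finset.sum_congr rfl fun j hj => ?_).trans
    (Finset.sum_range_sub (fun j => Finsupp.single (f j) (1 : ℤ)) i)
  obtain ⟨⟨x, s⟩, hw⟩ : ∃ l, w[j]? = some l :=
    ⟨_, List.getElem?_eq_getElem ((Finset.mem_range.mp hj).trans_le hi)⟩
  cases s <;> simp only [letterChain, hw, chainBoundary, AddMonoidHom.sub_apply,
    Finsupp.mapDomain.addMonoidHom_apply, Finsupp.mapDomain_single]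
  case false => rw [Finsupp.single_neg, Finsupp.single_neg, neg_sub_neg]

theorem eq_of_prefixChain_eq {w : List (X × Bool)} {f : ℕ → V} {i i' : ℕ}
    (hi : i ≤ w.length) (hi' : i' ≤ w.length) (h : prefixChain w f i = prefixChain w f i') :
    f i = f i' := by
  have hbd := congrArg chainBoundary h
  rw [chainBoundary_prefixChain f hi, chainBoundary_prefixChain f hi', sub_left_inj] at hbd
  exact (Finsupp.single_left_inj one_ne_zero).mp hbd

end Chains

section PrefixFlows

variable {X : Type*} {w : List (X × Bool)} {ν μ : ℕ → ℕ} {i i' : ℕ}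

theorem eq_of_pflow_eq (hi : i ≤ w.length) (hi' : i' ≤ w.length)
    (h : pflow w ν i = pflow w ν i') : ν i = ν i' :=
  eq_of_prefixChain_eq hi hi' <| DFunLike.coe_injective <| by
    rwa [coe_prefixChain, coe_prefixChain]

theorem pflow_eq_of_pflow_eq {φ : ℕ → ℕ} (hφ : ∀ j ≤ w.length, φ (ν j) = μ j)
    (hi : i ≤ w.length) (hi' : i' ≤ w.length) (h : pflow w ν i = pflow w ν i') :
    pflow w μ i = pflow w μ i' := by
  have hpush : ∀ k ≤ w.length,
      prefixChain w μ k = (prefixChain w ν k).mapDomain (Prod.map φ (Prod.map id φ)) :=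
    fun k hk => by
      rw [mapDomain_prefixChain]
      exact prefixChain_congr fun j hj => (hφ j (hj.trans hk)).symm
  have hchain : prefixChain w ν i = prefixChain w ν i' :=
    DFunLike.coe_injective <| by rwa [coe_prefixChain, coe_prefixChain]
  rw [← coe_prefixChain, ← coe_prefixChain, hpush i hi, hpush i' hi', hchain]

end PrefixFlows

theorem stmt12_general {X : Type*} (w : List (X × Bool)) (ν μ : ℕ → ℕ)
    (hfμ : (GraphOf w μ).Folded) (hcμ : (GraphOf w μ).CoFolded)
    (φ : ℕ → ℕ) (hφ : IsEpiOn (GraphOf w ν) (GraphOf w μ) φ) :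
    ∃ (ψ : ((ℕ × X × ℕ) → ℤ) → (ℕ × X × ℕ) → ℤ)
      (τ₁ : ((ℕ × X × ℕ) → ℤ) → ℕ) (τ₂ : ((ℕ × X × ℕ) → ℤ) → ℕ),
      IsEpiOn (IotaGraph w ν) (IotaGraph w μ) ψ ∧
      (∀ i ≤ w.length, ψ (pflow w ν i) = pflow w μ i) ∧
      IsEpiOn (IotaGraph w ν) (GraphOf w ν) τ₁ ∧
      (∀ i ≤ w.length, τ₁ (pflow w ν i) = ν i) ∧
      IsEpiOn (IotaGraph w μ) (GraphOf w μ) τ₂ ∧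
      (∀ i ≤ w.length, τ₂ (pflow w μ i) = μ i) ∧
      (∀ i ≤ w.length, φ (τ₁ (pflow w ν i)) = τ₂ (ψ (pflow w ν i))) := by
  have hφν : ∀ i ≤ w.length, φ (ν i) = μ i := hφ.1.apply_walk_eq hfμ hcμ
  obtain ⟨ψ, hψ⟩ := Function.exists_apply_eq_of_factorsThrough_Iic (f := pflow w ν)
    fun _ hi _ hi' => pflow_eq_of_pflow_eq hφν hi hi'
  obtain ⟨τ₁, hτ₁⟩ := Function.exists_apply_eq_of_factorsThrough_Iic (f := pflow w ν)
    fun _ hi _ hi' => eq_of_pflow_eq hi hi'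
  obtain ⟨τ₂, hτ₂⟩ := Function.exists_apply_eq_of_factorsThrough_Iic (f := pflow w μ)
    fun _ hi _ hi' => eq_of_pflow_eq hi hi'
  simp only [iotaGraph_eq_ofWalk, graphOf_eq_ofWalk]
  exact ⟨ψ, τ₁, τ₂, isEpiOn_ofWalk hψ, hψ, isEpiOn_ofWalk hτ₁, hτ₁, isEpiOn_ofWalk hτ₂, hτ₂,
    fun i hi => by rw [hτ₁ i hi, hψ i hi, hτ₂ i hi, hφν i hi]⟩

/-- If `Γ = GraphOf w ν` and `Δ = GraphOf w μ` are support graphs of a word `w` and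
`φ : Γ → Δ` is a rooted `X`-digraph epimorphism, then there is a rooted `X`-digraph
epimorphism `ψ : ι(Γ) → ι(Δ)` sending each prefix flow `π_{w_i}^{(Γ)}` to
`π_{w_i}^{(Δ)}`, and the square with the canonical maps `τ₁ : ι(Γ) → Γ`,
`τ₂ : ι(Δ) → Δ` commutes: `φ ∘ τ₁ = τ₂ ∘ ψ`. -/
theorem stmt12 {X : Type*} (w : List (X × Bool)) (ν μ : ℕ → ℕ)
    (hfν : (GraphOf w ν).Folded) (hcν : (GraphOf w ν).CoFolded)
    (hfμ : (GraphOf w μ).Folded) (hcμ : (GraphOf w μ).CoFolded)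
    (φ : ℕ → ℕ) (hφ : IsEpiOn (GraphOf w ν) (GraphOf w μ) φ) :
    ∃ (ψ : ((ℕ × X × ℕ) → ℤ) → (ℕ × X × ℕ) → ℤ)
      (τ₁ : ((ℕ × X × ℕ) → ℤ) → ℕ) (τ₂ : ((ℕ × X × ℕ) → ℤ) → ℕ),
      IsEpiOn (IotaGraph w ν) (IotaGraph w μ) ψ ∧
      (∀ i ≤ w.length, ψ (pflow w ν i) = pflow w μ i) ∧
      IsEpiOn (IotaGraph w ν) (GraphOf w ν) τ₁ ∧
      (∀ i ≤ w.length, τ₁ (pflow w ν i) = ν i) ∧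
      IsEpiOn (IotaGraph w μ) (GraphOf w μ) τ₂ ∧
      (∀ i ≤ w.length, τ₂ (pflow w μ i) = μ i) ∧
      (∀ i ≤ w.length, φ (τ₁ (pflow w ν i)) = τ₂ (ψ (pflow w ν i))) :=
  stmt12_general w ν μ hfμ hcμ φ hφ
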